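/- Let φ be a formula of SCL, 𝔄 a suitable model and s a suitable assignment. If Eloise has a winning strategy in the n-bounded evaluation game G_n(𝔄,s,φ) for some n ∈ ℕ, then she has a winning strategy in the unbounded evaluation game G_∞(𝔄,s,φ). -/

import Mathlib

/-
Common formalization of the logics SCL (static computation logic, unbounded
game-theoretic semantics) and BndSCL (bounded semantics), following the paper
"First-order logic with self-reference".

* Games are played on arbitrary (possibly infinite) arenas; plays are maximal
  walks; strategies are functions from finite walks (histories) to positions;
  infinite plays, and finite plays ending at a dead end where `win` holds for
  neither player, are won by nobody.
* The semantic games are formalized with positions carrying the current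
  (sub)formula, an environment binding each label symbol to the labelled
  formula it most recently named (this is the standard closure rendering of
  "reference formula of a claim-symbol occurrence"), the current assignment
  and the polarity (+ = true, − = false).  The bounded game additionally
  carries a clock value.
-/

set_option autoImplicit false

universe u

/-! ## Generic two-player games on (possibly infinite) arenas -/

inductive Player : Type
  | eloise : Player
  | abelard : Player
deriving DecidableEq

def Player.opp : Player → Player
  | .eloise => .abelard
  | .abelard => .eloise

/-- A game arena: an ownership function (corresponding to the partition
`V = V₀ ∪ V₁`), an edge relation, and a predicate telling which player (if
any) wins a play ending at a given dead-end position. -/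
structure GameArena (P : Type u) where
  turn : P → Player
  edge : P → P → Prop
  win : P → Player → Prop

namespace GameArena

variable {P : Type u} (A : GameArena P)

def DeadEnd (u : P) : Prop := ∀ x, ¬ A.edge u x

/-- `w` is a finite nonempty walk whose first element is `v`. -/
def IsWalkFrom (v : P) (w : List P) : Prop :=
  w.head? = some v ∧ List.Chain' A.edge w

/-- A finite (maximal) play from `v`: a walk whose last element is a dead end. -/
def IsFinitePlay (v : P) (w : List P) : Prop :=
  A.IsWalkFrom v w ∧ ∀ u, w.getLast? = some u → A.DeadEnd u

/-- An infinite play from `v`. -/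
def IsInfPlay (v : P) (f : ℕ → P) : Prop :=
  f 0 = v ∧ ∀ n, A.edge (f n) (f (n + 1))

/-- A strategy (a function from histories to positions) of player `pl` is
legal if it always prescribes a move along an edge whenever a move exists. -/
def LegalFor (pl : Player) (v : P) (σ : List P → P) : Prop :=
  ∀ w u, A.IsWalkFrom v w → w.getLast? = some u → A.turn u = pl →
    (∃ x, A.edge u x) → A.edge u (σ w)

/-- The strategy `σ` of player `pl` is followed in the finite play `w`. -/
def FollowsFin (pl : Player) (σ : List P → P) (w : List P) : Prop :=
  ∀ q u x, (q ++ [x]) <+: w → q.getLast? = some u → A.turn u = pl → x = σ q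

/-- The strategy `σ` of player `pl` is followed in the infinite play `f`. -/
def FollowsInf (pl : Player) (σ : List P → P) (f : ℕ → P) : Prop :=
  ∀ n, A.turn (f n) = pl →
    f (n + 1) = σ (List.ofFn fun i : Fin (n + 1) => f i)

/-- `σ` is a winning strategy of player `pl` from `v`: it is legal, every
finite maximal play following it ends in a dead end won by `pl`, and no
infinite play follows it (infinite plays are won by neither player). -/
def WinningStrategy (pl : Player) (v : P) (σ : List P → P) : Prop :=
  A.LegalFor pl v σ ∧
  (∀ w, A.IsFinitePlay v w → A.FollowsFin pl σ w →
      ∃ u, w.getLast? = some u ∧ A.win u pl) ∧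
  (∀ f, A.IsInfPlay v f → ¬ A.FollowsInf pl σ f)

def HasWinningStrategy (pl : Player) (v : P) : Prop :=
  ∃ σ : List P → P, A.WinningStrategy pl v σ

end GameArena

/-- A positional strategy: its moves depend only on the current position. -/
def Positional {P : Type u} (σ : List P → P) : Prop :=
  ∀ q q' : List P, q.getLast? = q'.getLast? → σ q = σ q'

/-! ## Syntax of SCL / BndSCL -/

/-- A purely relational vocabulary. -/
structure Vocab : Type 1 where
  Rel : Type
  arity : Rel → ℕ

/-- Formulas of SCL / BndSCL over the vocabulary `V`.  Variables and label
symbols are natural numbers; `claim L` is the claim symbol `C_L` and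
`lab L φ` is the labelled formula `L φ`. -/
inductive SCLFormula (V : Vocab) : Type
  | bot : SCLFormula V
  | eq (x y : ℕ) : SCLFormula V
  | rel (R : V.Rel) (args : Fin (V.arity R) → ℕ) : SCLFormula V
  | claim (L : ℕ) : SCLFormula V
  | not (φ : SCLFormula V) : SCLFormula V
  | and (φ ψ : SCLFormula V) : SCLFormula V
  | or (φ ψ : SCLFormula V) : SCLFormula V
  | ex (x : ℕ) (φ : SCLFormula V) : SCLFormula V
  | all (x : ℕ) (φ : SCLFormula V) : SCLFormula V
  | lab (L : ℕ) (φ : SCLFormula V) : SCLFormula V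

namespace SCLFormula

variable {V : Vocab}

/-- First-order atoms. -/
def IsFOAtom : SCLFormula V → Prop
  | .bot => True
  | .eq _ _ => True
  | .rel _ _ => True
  | _ => False

/-- Purely first-order formulas (no claim symbols, no label symbols). -/
def IsFO : SCLFormula V → Prop
  | .bot => True
  | .eq _ _ => True
  | .rel _ _ => True
  | .claim _ => False
  | .not φ => IsFO φ
  | .and φ ψ => IsFO φ ∧ IsFO ψ
  | .or φ ψ => IsFO φ ∧ IsFO ψ
  | .ex _ φ => IsFO φ
  | .all _ φ => IsFO φ
  | .lab _ _ => False

/-- Free (individual) variables. -/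
def freeVars : SCLFormula V → Finset ℕ
  | .bot => ∅
  | .eq x y => {x, y}
  | .rel _ a => Finset.image a Finset.univ
  | .claim _ => ∅
  | .not φ => freeVars φ
  | .and φ ψ => freeVars φ ∪ freeVars ψ
  | .or φ ψ => freeVars φ ∪ freeVars ψ
  | .ex x φ => freeVars φ \ {x}
  | .all x φ => freeVars φ \ {x}
  | .lab _ φ => freeVars φ

/-- All variables occurring in a formula (free or bound). -/
def vars : SCLFormula V → Finset ℕ
  | .bot => ∅
  | .eq x y => {x, y}
  | .rel _ a => Finset.image a Finset.univ
  | .claim _ => ∅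
  | .not φ => vars φ
  | .and φ ψ => vars φ ∪ vars ψ
  | .or φ ψ => vars φ ∪ vars ψ
  | .ex x φ => insert x (vars φ)
  | .all x φ => insert x (vars φ)
  | .lab _ φ => vars φ

/-- Sentences: formulas with no free variables. -/
def IsSentence (φ : SCLFormula V) : Prop := freeVars φ = ∅

end SCLFormula

/-! ## Structures and first-order (Tarski) satisfaction -/

/-- A (suitable) model for vocabulary `V`: a nonempty domain together with an
interpretation of all relation symbols. -/
structure Struct (V : Vocab) where
  Dom : Type u
  dom_nonempty : Nonempty Dom
  interp : ∀ R : V.Rel, (Fin (V.arity R) → Dom) → Prop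

attribute [instance] Struct.dom_nonempty

/-- Satisfaction of atoms (false on non-atoms). -/
def atomSat {V : Vocab} (M : Struct.{u} V) (s : ℕ → M.Dom) : SCLFormula V → Prop
  | .bot => False
  | .eq x y => s x = s y
  | .rel R a => M.interp R fun i => s (a i)
  | _ => False

/-- Standard (Tarski) first-order satisfaction.  It is only meaningful on
purely first-order formulas; claim symbols are interpreted as `False` and
label symbols are ignored. -/
def FOSat {V : Vocab} (M : Struct.{u} V) : (ℕ → M.Dom) → SCLFormula V → Prop
  | _, .bot => False
  | s, .eq x y => s x = s y
  | s, .rel R a => M.interp R fun i => s (a i)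
  | _, .claim _ => False
  | s, .not φ => ¬ FOSat M s φ
  | s, .and φ ψ => FOSat M s φ ∧ FOSat M s ψ
  | s, .or φ ψ => FOSat M s φ ∨ FOSat M s ψ
  | s, .ex x φ => ∃ a : M.Dom, FOSat M (Function.update s x a) φ
  | s, .all x φ => ∀ a : M.Dom, FOSat M (Function.update s x a) φ
  | s, .lab _ φ => FOSat M s φ

/-! ## The evaluation games -/

/-- A position of the semantic game: the current formula, the environment
recording for each label symbol `L` the reference formula `L ψ` it currently
names, the current assignment, and the polarity (`true` = `+`). -/
structure SCLPos (V : Vocab) (D : Type u) : Type u where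
  form : SCLFormula V
  env : ℕ → Option (SCLFormula V)
  asg : ℕ → D
  pol : Bool

/-- Which player moves at a given position. (At positions with at most one
successor the owner is irrelevant; we let Eloise own them.) -/
def posTurn {V : Vocab} {D : Type u} (p : SCLPos V D) : Player :=
  match p.form, p.pol with
  | .and _ _, true => .abelard
  | .and _ _, false => .eloise
  | .or _ _, true => .eloise
  | .or _ _, false => .abelard
  | .all _ _, true => .abelard
  | .all _ _, false => .eloise
  | .ex _ _, true => .eloise
  | .ex _ _, false => .abelard
  | _, _ => .eloise

/-- Who wins a play ending at a given position: at an FO-atom position,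
Eloise wins iff the atom's truth value agrees with the polarity, and Abelard
wins otherwise; plays ending anywhere else (e.g. at a claim symbol with no
reference formula, or with clock value 0) are won by neither player. -/
def posWin {V : Vocab} (M : Struct.{u} V) (p : SCLPos V M.Dom) : Player → Prop
  | .eloise => p.form.IsFOAtom ∧ (atomSat M p.asg p.form ↔ p.pol = true)
  | .abelard => p.form.IsFOAtom ∧ ¬ (atomSat M p.asg p.form ↔ p.pol = true)

/-- Moves of the unbounded evaluation game `G_∞`. -/
inductive UStep {V : Vocab} (M : Struct.{u} V) :
    SCLPos V M.Dom → SCLPos V M.Dom → Prop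
  | neg (φ : SCLFormula V) (e : ℕ → Option (SCLFormula V)) (s : ℕ → M.Dom) (b : Bool) :
      UStep M ⟨.not φ, e, s, b⟩ ⟨φ, e, s, !b⟩
  | andLeft (φ ψ : SCLFormula V) (e : ℕ → Option (SCLFormula V)) (s : ℕ → M.Dom) (b : Bool) :
      UStep M ⟨.and φ ψ, e, s, b⟩ ⟨φ, e, s, b⟩
  | andRight (φ ψ : SCLFormula V) (e : ℕ → Option (SCLFormula V)) (s : ℕ → M.Dom) (b : Bool) :
      UStep M ⟨.and φ ψ, e, s, b⟩ ⟨ψ, e, s, b⟩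
  | orLeft (φ ψ : SCLFormula V) (e : ℕ → Option (SCLFormula V)) (s : ℕ → M.Dom) (b : Bool) :
      UStep M ⟨.or φ ψ, e, s, b⟩ ⟨φ, e, s, b⟩
  | orRight (φ ψ : SCLFormula V) (e : ℕ → Option (SCLFormula V)) (s : ℕ → M.Dom) (b : Bool) :
      UStep M ⟨.or φ ψ, e, s, b⟩ ⟨ψ, e, s, b⟩
  | exStep (x : ℕ) (φ : SCLFormula V) (e : ℕ → Option (SCLFormula V)) (s : ℕ → M.Dom)
      (b : Bool) (a : M.Dom) :
      UStep M ⟨.ex x φ, e, s, b⟩ ⟨φ, e, Function.update s x a, b⟩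
  | allStep (x : ℕ) (φ : SCLFormula V) (e : ℕ → Option (SCLFormula V)) (s : ℕ → M.Dom)
      (b : Bool) (a : M.Dom) :
      UStep M ⟨.all x φ, e, s, b⟩ ⟨φ, e, Function.update s x a, b⟩
  | labStep (L : ℕ) (φ : SCLFormula V) (e : ℕ → Option (SCLFormula V)) (s : ℕ → M.Dom)
      (b : Bool) :
      UStep M ⟨.lab L φ, e, s, b⟩ ⟨φ, Function.update e L (some (.lab L φ)), s, b⟩
  | claimStep (L : ℕ) (e : ℕ → Option (SCLFormula V)) (s : ℕ → M.Dom) (b : Bool)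
      (χ : SCLFormula V) (h : e L = some χ) :
      UStep M ⟨.claim L, e, s, b⟩ ⟨χ, e, s, b⟩

/-- Moves of the `n`-bounded evaluation game: positions additionally carry a
clock value, which decreases by one exactly at jumps from a claim symbol to
its reference formula; a claim-symbol position with clock value `0` is a dead
end won by neither player. -/
inductive BStep {V : Vocab} (M : Struct.{u} V) :
    SCLPos V M.Dom × ℕ → SCLPos V M.Dom × ℕ → Prop
  | neg (φ : SCLFormula V) (e : ℕ → Option (SCLFormula V)) (s : ℕ → M.Dom) (b : Bool) (n : ℕ) :
      BStep M (⟨.not φ, e, s, b⟩, n) (⟨φ, e, s, !b⟩, n)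
  | andLeft (φ ψ : SCLFormula V) (e : ℕ → Option (SCLFormula V)) (s : ℕ → M.Dom) (b : Bool)
      (n : ℕ) : BStep M (⟨.and φ ψ, e, s, b⟩, n) (⟨φ, e, s, b⟩, n)
  | andRight (φ ψ : SCLFormula V) (e : ℕ → Option (SCLFormula V)) (s : ℕ → M.Dom) (b : Bool)
      (n : ℕ) : BStep M (⟨.and φ ψ, e, s, b⟩, n) (⟨ψ, e, s, b⟩, n)
  | orLeft (φ ψ : SCLFormula V) (e : ℕ → Option (SCLFormula V)) (s : ℕ → M.Dom) (b : Bool)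
      (n : ℕ) : BStep M (⟨.or φ ψ, e, s, b⟩, n) (⟨φ, e, s, b⟩, n)
  | orRight (φ ψ : SCLFormula V) (e : ℕ → Option (SCLFormula V)) (s : ℕ → M.Dom) (b : Bool)
      (n : ℕ) : BStep M (⟨.or φ ψ, e, s, b⟩, n) (⟨ψ, e, s, b⟩, n)
  | exStep (x : ℕ) (φ : SCLFormula V) (e : ℕ → Option (SCLFormula V)) (s : ℕ → M.Dom)
      (b : Bool) (n : ℕ) (a : M.Dom) :
      BStep M (⟨.ex x φ, e, s, b⟩, n) (⟨φ, e, Function.update s x a, b⟩, n)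
  | allStep (x : ℕ) (φ : SCLFormula V) (e : ℕ → Option (SCLFormula V)) (s : ℕ → M.Dom)
      (b : Bool) (n : ℕ) (a : M.Dom) :
      BStep M (⟨.all x φ, e, s, b⟩, n) (⟨φ, e, Function.update s x a, b⟩, n)
  | labStep (L : ℕ) (φ : SCLFormula V) (e : ℕ → Option (SCLFormula V)) (s : ℕ → M.Dom)
      (b : Bool) (n : ℕ) :
      BStep M (⟨.lab L φ, e, s, b⟩, n) (⟨φ, Function.update e L (some (.lab L φ)), s, b⟩, n)
  | claimStep (L : ℕ) (e : ℕ → Option (SCLFormula V)) (s : ℕ → M.Dom) (b : Bool)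
      (χ : SCLFormula V) (n : ℕ) (h : e L = some χ) :
      BStep M (⟨.claim L, e, s, b⟩, n + 1) (⟨χ, e, s, b⟩, n)

/-- The unbounded evaluation game `G_∞(𝔄, ·, ·)` as a game arena. -/
def gameU {V : Vocab} (M : Struct.{u} V) : GameArena (SCLPos V M.Dom) where
  turn := posTurn
  edge := UStep M
  win := posWin M

/-- The bounded evaluation games `G_n(𝔄, ·, ·)` (for all clock values `n`
simultaneously) as a game arena. -/
def gameB {V : Vocab} (M : Struct.{u} V) : GameArena (SCLPos V M.Dom × ℕ) where
  turn p := posTurn p.1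
  edge := BStep M
  win p := posWin M p.1

/-- The initial position of the evaluation game for `φ` under assignment `s`:
empty environment and positive polarity. -/
def initPos {V : Vocab} {D : Type u} (φ : SCLFormula V) (s : ℕ → D) : SCLPos V D :=
  ⟨φ, fun _ => none, s, true⟩

/-- Truth under the unbounded semantics (the logic SCL):
`𝔄,s ⊨ φ` iff Eloise has a winning strategy in `G_∞(𝔄,s,φ)`. -/
def SCLTrue {V : Vocab} (M : Struct.{u} V) (s : ℕ → M.Dom) (φ : SCLFormula V) : Prop :=
  (gameU M).HasWinningStrategy .eloise (initPos φ s)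

/-! ### The bounded game `G_ω` -/

/-- Positions of the game `G_ω`: the initial position (where Abelard picks a
number `n'`), the intermediate positions (where Eloise picks some `n ≥ n'`),
and the positions of the `n`-bounded games. -/
inductive GOPos (V : Vocab) (D : Type u) : Type u
  | start : GOPos V D
  | mid (n' : ℕ) : GOPos V D
  | inner (p : SCLPos V D) (clock : ℕ) : GOPos V D

inductive GOStep {V : Vocab} (M : Struct.{u} V) (φ : SCLFormula V) (s : ℕ → M.Dom) :
    GOPos V M.Dom → GOPos V M.Dom → Prop
  | abelardPick (n' : ℕ) : GOStep M φ s .start (.mid n')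
  | eloisePick (n' n : ℕ) (h : n' ≤ n) : GOStep M φ s (.mid n') (.inner (initPos φ s) n)
  | play (p q : SCLPos V M.Dom) (m k : ℕ) (h : BStep M (p, m) (q, k)) :
      GOStep M φ s (.inner p m) (.inner q k)

def goTurn {V : Vocab} {D : Type u} : GOPos V D → Player
  | .start => .abelard
  | .mid _ => .eloise
  | .inner p _ => posTurn p

def goWin {V : Vocab} (M : Struct.{u} V) : GOPos V M.Dom → Player → Prop
  | .inner p _, pl => posWin M p pl
  | _, _ => False

/-- The bounded evaluation game `G_ω(𝔄,s,φ)`: Abelard picks `n' ∈ ℕ`, then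
Eloise picks `n ≥ n'`, and then `G_n(𝔄,s,φ)` is played. -/
def gameOmega {V : Vocab} (M : Struct.{u} V) (φ : SCLFormula V) (s : ℕ → M.Dom) :
    GameArena (GOPos V M.Dom) where
  turn := goTurn
  edge := GOStep M φ s
  win := goWin M

/-- Truth under the bounded semantics (the logic BndSCL):
`𝔄,s ⊨_ω φ` iff Eloise has a winning strategy in `G_ω(𝔄,s,φ)`. -/
def BndTrue {V : Vocab} (M : Struct.{u} V) (s : ℕ → M.Dom) (φ : SCLFormula V) : Prop :=
  (gameOmega M φ s).HasWinningStrategy .eloise .start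

/-! ## Approximants -/

/-- Auxiliary structural recursion for approximants: `k` tells what to put in
place of a claim symbol.  Label symbols are deleted (while updating the
environment), and polarity is tracked through negations. -/
def approxCore {V : Vocab}
    (k : (ℕ → Option (SCLFormula V)) → Bool → ℕ → SCLFormula V) :
    (ℕ → Option (SCLFormula V)) → Bool → SCLFormula V → SCLFormula V
  | _, _, .bot => .bot
  | _, _, .eq x y => .eq x y
  | _, _, .rel R a => .rel R a
  | e, b, .claim L => k e b L
  | e, b, .not φ => .not (approxCore k e (!b) φ)
  | e, b, .and φ ψ => .and (approxCore k e b φ) (approxCore k e b ψ)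
  | e, b, .or φ ψ => .or (approxCore k e b φ) (approxCore k e b ψ)
  | e, b, .ex x φ => .ex x (approxCore k e b φ)
  | e, b, .all x φ => .all x (approxCore k e b φ)
  | e, b, .lab L φ => approxCore k (Function.update e L (some (.lab L φ))) b φ

/-- `approx n e b φ` unfolds each claim symbol of `φ` (in environment `e`,
under polarity `b`) through `n` jumps to reference formulas; claim symbols
reached with exhausted budget (or with no reference formula) are replaced by
`⊥` at positive occurrences and `⊤` (i.e. `¬⊥`) at negative occurrences, and
all label symbols are deleted. -/
def approx {V : Vocab} : ℕ → (ℕ → Option (SCLFormula V)) → Bool → SCLFormula V → SCLFormula V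
  | 0 => approxCore fun _ b _ => if b then .bot else .not .bot
  | n + 1 => approxCore fun e b L =>
      match e L with
      | some χ => approx n e b χ
      | none => if b then .bot else .not .bot

/-- The `n`-th approximant `Φⁿ_φ` of `φ`: the first-order formula obtained
from the `n`-th unfolding of `φ` by deleting all label symbols and replacing
positive claim occurrences by `⊥` and negative ones by `⊤`. -/
def approximant {V : Vocab} (φ : SCLFormula V) (n : ℕ) : SCLFormula V :=
  approx n (fun _ => none) true φ

/-!
Eloise plays `G_∞` by running her winning strategy of `G_n` on the history annotated with
clock values. A move of `G_∞` is also a move of `G_n`, except a jump from a claim symbol at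
clock `0`, which is a dead end of `G_n` won by nobody; her winning strategy never reaches such
a position. So every play of `G_∞` that follows the simulated strategy becomes, once annotated,
a play of `G_n` that follows the original one, with the same last position if it is finite.
-/

section Clock

variable {P : Type u} {C : Type*}

def annotate (tick : C → P → C) : C → List P → List (P × C)
  | _, [] => []
  | c, p :: w => (p, c) :: annotate tick (tick c p) w

variable {tick : C → P → C}

theorem annotate_append (c : C) (w₁ w₂ : List P) :
    annotate tick c (w₁ ++ w₂) =
      annotate tick c w₁ ++ annotate tick (w₁.foldl tick c) w₂ := by
  induction w₁ generalizing c with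
  | nil => rfl
  | cons p w ih => simp [annotate, ih]

theorem exists_getLast?_annotate {c₀ : C} {w : List P} {p : P} (hw : w.getLast? = some p) :
    ∃ c, (annotate tick c₀ w).getLast? = some (p, c) ∧
      ∀ p', annotate tick c₀ (w ++ [p']) = annotate tick c₀ w ++ [(p', tick c p)] := by
  obtain ⟨w', rfl⟩ := List.getLast?_eq_some_iff.mp hw
  refine ⟨w'.foldl tick c₀, by simp [annotate_append, annotate], fun p' => ?_⟩
  simp [annotate_append, annotate]

theorem annotate_ofFn (c₀ : C) (f : ℕ → P) (k : ℕ) :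
    annotate tick c₀ (List.ofFn fun i : Fin k => f i) =
      List.ofFn fun i : Fin k => (f i, (List.ofFn fun j : Fin i => f j).foldl tick c₀) := by
  induction k with
  | zero => rfl
  | succ k ih =>
    simp only [List.ofFn_succ_last, Fin.val_castSucc, Fin.val_last, annotate_append, ih]
    rfl

end Clock

namespace GameArena

section Plays

variable {P : Type u} (A : GameArena P)

open Classical in
/-- Legality is demanded on every history, also on those where `σ` proposes an illegal move;
there `legalize` plays some legal move instead. -/
noncomputable def legalize (σ : List P → P) (w : List P) : P :=
  if h : ∃ x, ∃ u ∈ w.getLast?, A.edge u x ∧ ¬ A.edge u (σ w) then h.choose else σ w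

variable {A}

theorem legalize_of_edge {σ : List P → P} {w : List P} {u : P} (hu : w.getLast? = some u)
    (hσ : A.edge u (σ w)) : A.legalize σ w = σ w := by
  rw [legalize, dif_neg]
  rintro ⟨x, u', hu', -, hσ'⟩
  rw [Option.mem_def, hu, Option.some_inj] at hu'
  exact hσ' (hu' ▸ hσ)

theorem legalFor_legalize (pl : Player) (v : P) (σ : List P → P) :
    A.LegalFor pl v (A.legalize σ) := by
  rintro w u - hu - ⟨x, hx⟩
  by_cases hσ : A.edge u (σ w)
  · rwa [legalize_of_edge hu hσ]
  · have h : ∃ x, ∃ u ∈ w.getLast?, A.edge u x ∧ ¬ A.edge u (σ w) :=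
      ⟨x, u, hu, hx, hσ⟩
    obtain ⟨u', hu', hedge, -⟩ := h.choose_spec
    rw [Option.mem_def, hu, Option.some_inj] at hu'
    rw [legalize, dif_pos h, hu']
    exact hedge

theorem isWalkFrom_iff {v : P} {w : List P} :
    A.IsWalkFrom v w ↔ w.head? = some v ∧ List.IsChain A.edge w := Iff.rfl

theorem isWalkFrom_append_singleton {v x : P} {w : List P} (hw : w ≠ []) :
    A.IsWalkFrom v (w ++ [x]) ↔ A.IsWalkFrom v w ∧ ∀ u ∈ w.getLast?, A.edge u x := by
  simp only [isWalkFrom_iff, List.head?_append_of_ne_nil _ hw, List.isChain_append,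
    List.isChain_singleton, List.head?_cons, Option.mem_some_iff, forall_eq', true_and, and_assoc]

theorem followsFin_append_singleton {pl : Player} {σ : List P → P} {w : List P} {x : P} :
    A.FollowsFin pl σ (w ++ [x]) ↔
      A.FollowsFin pl σ w ∧ ∀ u ∈ w.getLast?, A.turn u = pl → x = σ w := by
  constructor
  · intro h
    exact ⟨fun q u y hq => h q u y (hq.trans (List.prefix_append w [x])),
      fun u hu => h w u x List.prefix_rfl hu⟩
  · rintro ⟨h, hlast⟩ q u y hq hu hturn
    rcases List.prefix_concat_iff.mp hq with hq | hq
    · obtain ⟨rfl, hy⟩ := List.append_inj' hq rfl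
      exact (List.singleton_inj.mp hy) ▸ hlast u hu hturn
    · exact h q u y hq hu hturn

theorem isInfPlay_iff_forall_isWalkFrom {v : P} {f : ℕ → P} :
    A.IsInfPlay v f ↔ ∀ k, A.IsWalkFrom v (List.ofFn fun i : Fin (k + 1) => f i) := by
  have hhead : ∀ k, (List.ofFn fun i : Fin (k + 1) => f i).head? = some (f 0) := by simp
  simp only [IsInfPlay, isWalkFrom_iff, List.isChain_ofFn, hhead, Option.some_inj]
  constructor
  · rintro ⟨h0, hf⟩ k
    exact ⟨h0, fun i _ => hf i⟩
  · intro h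
    exact ⟨(h 0).1, fun i => (h (i + 1)).2 i (by omega)⟩

theorem followsInf_iff_forall_followsFin {pl : Player} {σ : List P → P} {f : ℕ → P} :
    A.FollowsInf pl σ f ↔ ∀ k, A.FollowsFin pl σ (List.ofFn fun i : Fin k => f i) := by
  have hsucc : ∀ k, (List.ofFn fun i : Fin (k + 1) => f i) =
      (List.ofFn fun i : Fin k => f i) ++ [f k] := fun k => List.ofFn_succ_last
  constructor
  · intro h k
    induction k with
    | zero => simp [FollowsFin]
    | succ k ih =>
      rw [hsucc, followsFin_append_singleton]
      refine ⟨ih, fun u hu hturn => ?_⟩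
      cases k with
      | zero => simp at hu
      | succ k =>
        rw [hsucc, List.getLast?_concat, Option.mem_some_iff] at hu
        subst hu
        exact h k hturn
  · intro h k hturn
    have := (followsFin_append_singleton.mp (hsucc (k + 1) ▸ h (k + 2))).2 (f k)
    exact this (by rw [hsucc]; exact List.getLast?_concat) hturn

theorem WinningStrategy.win_of_deadEnd {pl : Player} {v : P} {σ : List P → P}
    (hσ : A.WinningStrategy pl v σ) {w : List P} {u : P} (hw : A.IsWalkFrom v w)
    (hf : A.FollowsFin pl σ w) (hu : w.getLast? = some u) (hdead : A.DeadEnd u) :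
    A.win u pl := by
  have hplay : A.IsFinitePlay v w :=
    ⟨hw, fun u' hu' => by rw [hu, Option.some_inj] at hu'; exact hu' ▸ hdead⟩
  obtain ⟨u', hu', hwin⟩ := hσ.2.1 w hplay hf
  rw [hu, Option.some_inj] at hu'
  exact hu' ▸ hwin

end Plays

variable {P : Type u} {C : Type*}

structure IsClockedRestriction (A : GameArena P) (B : GameArena (P × C)) (tick : C → P → C)
    (pl : Player) : Prop where
  edge_fst {p p' : P} {c c' : C} : B.edge (p, c) (p', c') → A.edge p p' ∧ c' = tick c p
  edge_or_stuck {p p' : P} (c : C) :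
    A.edge p p' → B.edge (p, c) (p', tick c p) ∨ (B.DeadEnd (p, c) ∧ ¬ B.win (p, c) pl)
  turn_eq (p : P) (c : C) : B.turn (p, c) = A.turn p
  win_fst {p : P} {c : C} : B.win (p, c) pl → A.win p pl

noncomputable def simulate (A : GameArena P) (tick : C → P → C) (c₀ : C)
    (σ : List (P × C) → P × C) : List P → P :=
  A.legalize fun w => (σ (annotate tick c₀ w)).1

variable {A : GameArena P} {B : GameArena (P × C)} {tick : C → P → C} {pl : Player}
  {v : P} {c₀ : C} {σ : List (P × C) → P × C}

namespace IsClockedRestriction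

theorem simulate_spec (hR : IsClockedRestriction A B tick pl) (hσ : B.LegalFor pl (v, c₀) σ)
    {w : List P} {p : P} {c : C} (hW : B.IsWalkFrom (v, c₀) (annotate tick c₀ w))
    (hlast : (annotate tick c₀ w).getLast? = some (p, c)) (hw : w.getLast? = some p)
    (hturn : A.turn p = pl) {q : P × C} (hq : B.edge (p, c) q) :
    σ (annotate tick c₀ w) = (simulate A tick c₀ σ w, tick c p) := by
  have hmove := hσ _ _ hW hlast ((hR.turn_eq p c).trans hturn) ⟨q, hq⟩
  generalize hx : σ (annotate tick c₀ w) = x at hmove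
  obtain ⟨hedge, hclock⟩ := hR.edge_fst hmove
  rw [simulate, legalize_of_edge hw (by rwa [hx]), hx]
  exact Prod.ext rfl hclock

theorem annotate_isWalkFrom_followsFin (hR : IsClockedRestriction A B tick pl)
    (hσ : B.WinningStrategy pl (v, c₀) σ) {w : List P} (hw : A.IsWalkFrom v w)
    (hf : A.FollowsFin pl (simulate A tick c₀ σ) w) :
    B.IsWalkFrom (v, c₀) (annotate tick c₀ w) ∧
      B.FollowsFin pl σ (annotate tick c₀ w) := by
  induction w using List.reverseRecOn with
  | nil => simp [isWalkFrom_iff] at hw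
  | append_singleton w p' ih =>
    cases hlast : w.getLast? with
    | none =>
      obtain rfl := List.getLast?_eq_none_iff.mp hlast
      obtain rfl : p' = v := by simpa [isWalkFrom_iff] using hw.1
      refine ⟨⟨rfl, List.isChain_singleton _⟩, fun q u y hq hu _ => ?_⟩
      obtain rfl : q = [] := by simpa [annotate] using hq.length_le
      simp at hu
    | some p =>
      have hne : w ≠ [] := by rintro rfl; simp at hlast
      obtain ⟨hw', hedge⟩ := (isWalkFrom_append_singleton hne).mp hw
      obtain ⟨hf', hfollow⟩ := followsFin_append_singleton.mp hf
      obtain ⟨hW, hF⟩ := ih hw' hf'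
      obtain ⟨c, hWlast, hann⟩ := exists_getLast?_annotate (tick := tick) (c₀ := c₀) hlast
      have hWne : annotate tick c₀ w ≠ [] := by rintro h; simp [h] at hWlast
      rw [hann]
      rcases hR.edge_or_stuck c (hedge p hlast) with hB | ⟨hdead, hlose⟩
      · refine ⟨(isWalkFrom_append_singleton hWne).mpr ⟨hW, ?_⟩,
          followsFin_append_singleton.mpr ⟨hF, ?_⟩⟩
        · rintro u hu
          rw [hWlast, Option.mem_some_iff] at hu
          exact hu ▸ hB
        · rintro u hu hturn
          rw [hWlast, Option.mem_some_iff] at hu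
          subst hu
          rw [hR.turn_eq] at hturn
          rw [hR.simulate_spec hσ.1 hW hWlast hlast hturn hB, ← hfollow p hlast hturn]
      · exact absurd (hσ.win_of_deadEnd hW hF hWlast hdead) hlose

theorem exists_win_of_isFinitePlay (hR : IsClockedRestriction A B tick pl)
    (hσ : B.WinningStrategy pl (v, c₀) σ) {w : List P} (hw : A.IsFinitePlay v w)
    (hf : A.FollowsFin pl (simulate A tick c₀ σ) w) :
    ∃ u, w.getLast? = some u ∧ A.win u pl := by
  obtain ⟨hW, hF⟩ := hR.annotate_isWalkFrom_followsFin hσ hw.1 hf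
  have hne : w ≠ [] := by rintro rfl; simp [IsFinitePlay, isWalkFrom_iff] at hw
  obtain ⟨u, hu⟩ := Option.isSome_iff_exists.mp (List.getLast?_isSome.mpr hne)
  obtain ⟨c, hWlast, -⟩ := exists_getLast?_annotate (tick := tick) (c₀ := c₀) hu
  refine ⟨u, hu, hR.win_fst (hσ.win_of_deadEnd hW hF hWlast ?_)⟩
  rintro ⟨x, c'⟩ hx
  exact hw.2 u hu x (hR.edge_fst hx).1

theorem not_followsInf (hR : IsClockedRestriction A B tick pl)
    (hσ : B.WinningStrategy pl (v, c₀) σ) {f : ℕ → P} (hf : A.IsInfPlay v f) :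
    ¬ A.FollowsInf pl (simulate A tick c₀ σ) f := by
  intro hfol
  let F : ℕ → P × C := fun i => (f i, (List.ofFn fun j : Fin i => f j).foldl tick c₀)
  have hB : ∀ k, B.IsWalkFrom (v, c₀) (List.ofFn fun i : Fin (k + 1) => F i) ∧
      B.FollowsFin pl σ (List.ofFn fun i : Fin (k + 1) => F i) := fun k => by
    rw [← annotate_ofFn]
    exact hR.annotate_isWalkFrom_followsFin hσ (isInfPlay_iff_forall_isWalkFrom.mp hf k)
      (followsInf_iff_forall_followsFin.mp hfol (k + 1))
  refine hσ.2.2 F (isInfPlay_iff_forall_isWalkFrom.mpr fun k => (hB k).1)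
    (followsInf_iff_forall_followsFin.mpr fun k => ?_)
  have hsucc := (hB k).2
  rw [List.ofFn_succ_last] at hsucc
  exact (followsFin_append_singleton.mp hsucc).1

theorem hasWinningStrategy (hR : IsClockedRestriction A B tick pl)
    (h : B.HasWinningStrategy pl (v, c₀)) : A.HasWinningStrategy pl v :=
  let ⟨σ, hσ⟩ := h
  ⟨simulate A tick c₀ σ, legalFor_legalize pl v _,
    fun _ hw hf => hR.exists_win_of_isFinitePlay hσ hw hf,
    fun _ hf => hR.not_followsInf hσ hf⟩

end IsClockedRestriction

end GameArena

-- At clock `0` a claim position is a dead end of `G_n`, so the truncated `0 - 1` is never used.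
def nextClock {V : Vocab} {D : Type u} (m : ℕ) (p : SCLPos V D) : ℕ :=
  match p.form with
  | .claim _ => m - 1
  | _ => m

theorem isClockedRestriction_gameB {V : Vocab} (M : Struct.{u} V) :
    (gameU M).IsClockedRestriction (gameB M) nextClock .eloise where
  edge_fst h := by
    cases h <;> exact ⟨by constructor <;> assumption, rfl⟩
  edge_or_stuck c h := by
    cases h with
    | claimStep L e s b χ hχ =>
      cases c with
      | zero =>
        refine .inr ⟨?_, fun h => h.1⟩
        rintro q hq
        cases hq
      | succ c => exact .inl (BStep.claimStep L e s b χ c hχ)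
    | _ => exact .inl (by constructor)
  turn_eq _ _ := rfl
  win_fst h := h

/-- If Eloise has a winning strategy in the `n`-bounded
evaluation game `G_n(𝔄,s,φ)` for some `n ∈ ℕ`, then she has a winning
strategy in the unbounded evaluation game `G_∞(𝔄,s,φ)`. -/
theorem bounded_win_implies_unbounded_win {V : Vocab} (φ : SCLFormula V)
    (M : Struct.{u} V) (s : ℕ → M.Dom) (n : ℕ)
    (h : (gameB M).HasWinningStrategy .eloise (initPos φ s, n)) :
    (gameU M).HasWinningStrategy .eloise (initPos φ s) :=
  (isClockedRestriction_gameB M).hasWinningStrategy h
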